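/- arXiv:1604.01091 — 2 statements merged into one kernel-verified Lean document; each statement's English description precedes it below -/
import Mathlib

section
/- Under lexicographic utilities, an assignment p is Pareto optimal if and only if the exchange graph G(p) contains no cycle containing at least one strict-preference edge. -/
open Finset

def IsPartition {N O : Type*} (p : N → Finset O) : Prop :=
  ∀ o : O, ∃! i : N, o ∈ p i

def Dominates {N O : Type*} [Fintype N] (u : N → O → ℝ) (q p : N → Finset O) : Prop :=
  (∀ i, ∑ o ∈ p i, u i o ≤ ∑ o ∈ q i, u i o) ∧ ∃ i, ∑ o ∈ p i, u i o < ∑ o ∈ q i, u i o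

def ParetoOptimal {N O : Type*} [Fintype N] (u : N → O → ℝ) (p : N → Finset O) : Prop :=
  ¬ ∃ q : N → Finset O, IsPartition q ∧ Dominates u q p

def nextFin {k : ℕ} (hk : 0 < k) (l : Fin k) : Fin k := ⟨(l.1 + 1) % k, Nat.mod_lt _ hk⟩

def Lexicographic {N O : Type*} [Fintype O] (u : N → O → ℝ) : Prop :=
  ∀ i o, (∑ o' ∈ univ.filter (fun o' => u i o' < u i o), u i o') < u i o

/-!
If `G(p)` has a cycle with a strict edge, letting every holder on the cycle give up its object for
the next one is a Pareto improvement. Conversely, let `q` dominate `p`. An agent who loses an object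
`o` in `q` must, by lexicographicity, gain an object at least as good as `o`, and that object was
itself moved; following such objects gives a cycle of `G(p)` through moved objects. If the cycle has
a strict edge we are done. Otherwise undoing its trades gives an assignment that still dominates
`p` and moves fewer objects, so we conclude by induction on the number of moved objects.
-/

open Function

section

variable {N O : Type*}

theorem val_finRotate {k : ℕ} (l : Fin k) : (finRotate k l : ℕ) = (l + 1) % k := by
  have := l.neZero
  rw [finRotate_apply, Fin.val_add, Fin.val_one', Nat.add_mod_mod]

theorem nextFin_eq_finRotate {k : ℕ} (hk : 0 < k) (l : Fin k) : nextFin hk l = finRotate k l :=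
  Fin.ext (val_finRotate l).symm

theorem exists_cycle_of_mapsTo {α : Type*} [Finite α] {f : α → α} {s : Set α}
    (hf : Set.MapsTo f s s) (hfix : ∀ x ∈ s, f x ≠ x) {x : α} (hx : x ∈ s) :
    ∃ (k : ℕ) (_ : 2 ≤ k) (c : Fin k → α),
      Injective c ∧ (∀ l, c l ∈ s) ∧ ∀ l, c (finRotate k l) = f (c l) := by
  obtain ⟨a, b, hab, heq⟩ : ∃ a b : ℕ, a < b ∧ f^[a] x = f^[b] x := by
    obtain ⟨a, b, hne, h⟩ := Finite.exists_ne_map_eq_of_infinite (f^[·] x)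
    rcases hne.lt_or_gt with hlt | hlt
    · exact ⟨a, b, hlt, h⟩
    · exact ⟨b, a, hlt, h.symm⟩
  set y := f^[a] x
  have hy : y ∈ s := hf.iterate a hx
  have hper : IsPeriodicPt f (b - a) y := by
    rw [IsPeriodicPt, IsFixedPt, ← iterate_add_apply, Nat.sub_add_cancel hab.le, ← heq]
  have hpos : 0 < minimalPeriod f y := hper.minimalPeriod_pos (Nat.sub_pos_of_lt hab)
  refine ⟨minimalPeriod f y, ?_, fun l => f^[l] y, fun l l' h => Fin.ext ?_,
    fun l => hf.iterate l hy, fun l => ?_⟩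
  · by_contra! h
    have hone : minimalPeriod f y = 1 := by omega
    exact hfix y hy (minimalPeriod_eq_one_iff_isFixedPt.mp hone)
  · exact iterate_injOn_Iio_minimalPeriod l.2 l'.2 h
  · simp only [val_finRotate, iterate_mod_minimalPeriod_eq, iterate_succ_apply']

theorem Lexicographic.pos [Fintype O] {u : N → O → ℝ} (hlex : Lexicographic u) (i : N) (o : O) :
    0 < u i o := by
  obtain ⟨m, -, hm⟩ := exists_min_image univ (u i) ⟨o, mem_univ o⟩
  have hbelow : univ.filter (fun o' => u i o' < u i m) = ∅ :=
    filter_eq_empty_iff.mpr fun o' _ => not_lt.mpr (hm o' (mem_univ o'))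
  have := hlex i m
  rw [hbelow, sum_empty] at this
  exact this.trans_le (hm o (mem_univ o))

theorem Lexicographic.exists_le_of_sum_le [Fintype O] [DecidableEq O] {u : N → O → ℝ}
    (hlex : Lexicographic u) (i : N) {A B : Finset O}
    (hAB : ∑ o ∈ A, u i o ≤ ∑ o ∈ B, u i o) {o : O} (ho : o ∈ A \ B) :
    ∃ t ∈ B \ A, u i o ≤ u i t := by
  by_contra! h
  have hnonneg : ∀ t, 0 ≤ u i t := fun t => (hlex.pos i t).le
  refine lt_irrefl (u i o) ?_
  calc u i o ≤ ∑ t ∈ A \ B, u i t := single_le_sum (fun t _ => hnonneg t) ho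
    _ ≤ ∑ t ∈ B \ A, u i t := by linarith [sum_sdiff_sub_sum_sdiff (f := u i) (s₁ := A) (s₂ := B)]
    _ ≤ ∑ t ∈ univ.filter (fun t => u i t < u i o), u i t :=
      sum_le_sum_of_subset_of_nonneg (fun t ht => mem_filter.mpr ⟨mem_univ t, h t ht⟩)
        (fun t _ _ => hnonneg t)
    _ < u i o := hlex i o

theorem IsPartition.eq_of_mem {p : N → Finset O} (hp : IsPartition p) {o : O} {i j : N}
    (hi : o ∈ p i) (hj : o ∈ p j) : i = j :=
  (hp o).unique hi hj

theorem IsPartition.eq_of_subset {p q : N → Finset O} (hp : IsPartition p) (hq : IsPartition q)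
    (h : ∀ i, p i ⊆ q i) : p = q := by
  funext i
  refine (h i).antisymm fun o hoq => ?_
  obtain ⟨j, hoj, -⟩ := hp o
  rwa [hq.eq_of_mem hoq (h j hoj)]

section Trade

variable {ι : Type*} [Fintype ι] [DecidableEq O]

/-- The holder of `c l` in `p` gives it up and receives `c (σ l)`. -/
def tradeAlong (p : N → Finset O) (c : ι → O) (σ : Equiv.Perm ι) (i : N) : Finset O :=
  (p i \ univ.image c) ∪ (univ.filter fun l => c l ∈ p i).image (c ∘ σ)

variable {p : N → Finset O} {c : ι → O} {σ : Equiv.Perm ι}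

theorem mem_tradeAlong {i : N} {o : O} :
    o ∈ tradeAlong p c σ i ↔ (o ∈ p i ∧ o ∉ Set.range c) ∨ ∃ l, c l ∈ p i ∧ c (σ l) = o := by
  simp [tradeAlong]

theorem IsPartition.tradeAlong (hp : IsPartition p) (hc : Injective c) (σ : Equiv.Perm ι) :
    IsPartition (tradeAlong p c σ) := by
  intro o
  by_cases ho : o ∈ Set.range c
  · obtain ⟨l, rfl⟩ := σ.surjective.range_comp c ▸ ho
    obtain ⟨i, hi, huniq⟩ := hp (c l)
    refine ⟨i, mem_tradeAlong.mpr (.inr ⟨l, hi, rfl⟩), fun j hj => ?_⟩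
    rcases mem_tradeAlong.mp hj with ⟨-, hn⟩ | ⟨l', hl', he⟩
    · exact absurd ⟨_, rfl⟩ hn
    · exact huniq j (σ.injective (hc he) ▸ hl')
  · obtain ⟨i, hi, huniq⟩ := hp o
    refine ⟨i, mem_tradeAlong.mpr (.inl ⟨hi, ho⟩), fun j hj => ?_⟩
    rcases mem_tradeAlong.mp hj with ⟨hj, -⟩ | ⟨l, -, rfl⟩
    · exact huniq j hj
    · exact absurd ⟨_, rfl⟩ ho

theorem sum_tradeAlong_sub_sum (hc : Injective c) (σ : Equiv.Perm ι) (i : N) (f : O → ℝ) :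
    ∑ o ∈ tradeAlong p c σ i, f o - ∑ o ∈ p i, f o =
      ∑ l ∈ univ.filter (fun l => c l ∈ p i), (f (c (σ l)) - f (c l)) := by
  have hsum : ∀ τ : Equiv.Perm ι, ∑ o ∈ tradeAlong p c τ i, f o =
      ∑ o ∈ p i \ univ.image c, f o + ∑ l ∈ univ.filter (fun l => c l ∈ p i), f (c (τ l)) := by
    intro τ
    rw [tradeAlong, sum_union, sum_image (hc.comp τ.injective).injOn]
    · rfl
    · exact disjoint_left.mpr fun o ho ho' =>
        (mem_sdiff.mp ho).2 (image_subset_iff.mpr (fun l _ => mem_image_of_mem c (mem_univ _)) ho')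
  have hrefl : tradeAlong p c (Equiv.refl ι) i = p i := by
    ext o
    rw [mem_tradeAlong]
    by_cases ho : o ∈ Set.range c
    · obtain ⟨l, rfl⟩ := ho
      simp [hc.eq_iff]
    · exact ⟨fun h => h.elim And.left fun ⟨l, _, hl⟩ => absurd ⟨l, hl⟩ ho, fun h => .inl ⟨h, ho⟩⟩
  have hp_sum := hsum (Equiv.refl ι)
  rw [hrefl] at hp_sum
  rw [hsum σ, hp_sum, sum_sub_distrib]
  simp only [Equiv.refl_apply]
  ring

theorem dominates_tradeAlong [Fintype N] {u : N → O → ℝ} (hc : Injective c)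
    (hweak : ∀ l i, c l ∈ p i → u i (c l) ≤ u i (c (σ l)))
    (hstrict : ∃ l i, c l ∈ p i ∧ u i (c l) < u i (c (σ l))) :
    Dominates u (tradeAlong p c σ) p := by
  refine ⟨fun i => sub_nonneg.mp ?_, ?_⟩
  · rw [sum_tradeAlong_sub_sum hc]
    exact sum_nonneg fun l hl => sub_nonneg.mpr (hweak l i (mem_filter.mp hl).2)
  · obtain ⟨l, i, hl, hlt⟩ := hstrict
    refine ⟨i, sub_pos.mp ?_⟩
    rw [sum_tradeAlong_sub_sum hc]
    exact sum_pos' (fun l hl => sub_nonneg.mpr (hweak l i (mem_filter.mp hl).2))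
      ⟨l, mem_filter.mpr ⟨mem_univ l, hl⟩, sub_pos.mpr hlt⟩

theorem dominates_tradeAlong_symm [Fintype N] {u : N → O → ℝ} {q : N → Finset O}
    (hp : IsPartition p) (hq : IsPartition q) (hdom : Dominates u q p) (hc : Injective c)
    (htie : ∀ l i, c l ∈ p i → c (σ l) ∈ q i ∧ u i (c l) = u i (c (σ l))) :
    Dominates u (tradeAlong q (c ∘ σ) σ.symm) p := by
  have hsum : ∀ j, ∑ o ∈ tradeAlong q (c ∘ σ) σ.symm j, u j o = ∑ o ∈ q j, u j o := by
    intro j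
    rw [← sub_eq_zero, sum_tradeAlong_sub_sum (hc.comp σ.injective)]
    refine sum_eq_zero fun l hl => ?_
    obtain ⟨i, hi, -⟩ := hp (c l)
    obtain ⟨hiq, heq⟩ := htie l i hi
    obtain rfl := hq.eq_of_mem hiq (mem_filter.mp hl).2
    simp [heq]
  simpa only [Dominates, hsum] using hdom

end Trade

def movedSet (p q : N → Finset O) : Set O := {o | ∃ i, o ∈ p i ∧ o ∉ q i}

theorem movedSet_nonempty [Fintype N] {u : N → O → ℝ} {p q : N → Finset O}
    (hp : IsPartition p) (hq : IsPartition q) (hdom : Dominates u q p) :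
    (movedSet p q).Nonempty := by
  by_contra! h
  have hpq : p = q := hp.eq_of_subset hq fun i o hoi => by
    by_contra hoq
    exact h.subset ⟨i, hoi, hoq⟩
  obtain ⟨i, hi⟩ := hdom.2
  exact lt_irrefl _ (hpq ▸ hi)

theorem exists_mem_movedSet_le [Fintype O] {u : N → O → ℝ} (hlex : Lexicographic u)
    {p q : N → Finset O} (hp : IsPartition p) (hq : IsPartition q)
    (hle : ∀ i, ∑ o ∈ p i, u i o ≤ ∑ o ∈ q i, u i o) {o : O} (ho : o ∈ movedSet p q) :
    ∃ t ∈ movedSet p q, t ≠ o ∧ ∀ i, o ∈ p i → t ∈ q i ∧ u i o ≤ u i t := by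
  classical
  obtain ⟨i, hoi, hoq⟩ := ho
  obtain ⟨t, ht, hot⟩ := hlex.exists_le_of_sum_le i (hle i) (mem_sdiff.mpr ⟨hoi, hoq⟩)
  obtain ⟨htq, htp⟩ := mem_sdiff.mp ht
  obtain ⟨j, htj, -⟩ := hp t
  refine ⟨t, ⟨j, htj, fun htq' => htp (hq.eq_of_mem htq' htq ▸ htj)⟩, ?_, fun i' hoi' => ?_⟩
  · rintro rfl
    exact htp hoi
  · obtain rfl := hp.eq_of_mem hoi' hoi
    exact ⟨htq, hot⟩

theorem ncard_movedSet_tradeAlong_lt [Fintype ι] [DecidableEq O] [Finite O]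
    {p q : N → Finset O} {c : ι → O} {σ : Equiv.Perm ι}
    (hcyc : ∀ l i, c l ∈ p i → c (σ l) ∈ q i) {x : ι} (hx : c x ∈ movedSet p q) :
    (movedSet p (tradeAlong q (c ∘ σ) σ.symm)).ncard < (movedSet p q).ncard := by
  have hkept : ∀ l i, c l ∈ p i → c l ∈ tradeAlong q (c ∘ σ) σ.symm i := fun l i hi =>
    mem_tradeAlong.mpr (.inr ⟨l, hcyc l i hi, by simp⟩)
  refine Set.ncard_lt_ncard ((Set.ssubset_iff_of_subset ?_).mpr ⟨c x, hx, ?_⟩) (Set.toFinite _)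
  · rintro o ⟨i, hoi, hoq'⟩
    refine ⟨i, hoi, fun hoq => hoq' (mem_tradeAlong.mpr (.inl ⟨hoq, ?_⟩))⟩
    rintro ⟨l, rfl⟩
    exact hoq' (hkept _ i hoi)
  · rintro ⟨i, hi, hn⟩
    exact hn (hkept x i hi)

theorem exists_strict_cycle_of_dominates [Fintype N] [Fintype O] {u : N → O → ℝ}
    (hlex : Lexicographic u) {p q : N → Finset O} (hp : IsPartition p) (hq : IsPartition q)
    (hdom : Dominates u q p) :
    ∃ (k : ℕ) (_ : 2 ≤ k) (c : Fin k → O), Injective c ∧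
      (∀ l i, c l ∈ p i → u i (c l) ≤ u i (c (finRotate k l))) ∧
      ∃ l i, c l ∈ p i ∧ u i (c l) < u i (c (finRotate k l)) := by
  classical
  induction hn : (movedSet p q).ncard using Nat.strong_induction_on generalizing q with
  | _ n ih =>
  choose! F hFmoved hFne hF using
    fun o (ho : o ∈ movedSet p q) => exists_mem_movedSet_le hlex hp hq hdom.1 ho
  obtain ⟨x, hx⟩ := movedSet_nonempty hp hq hdom
  obtain ⟨k, hk, c, hc, hcmoved, hcF⟩ := exists_cycle_of_mapsTo hFmoved hFne hx
  have hedge : ∀ l i, c l ∈ p i →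
      c (finRotate k l) ∈ q i ∧ u i (c l) ≤ u i (c (finRotate k l)) := fun l i hi =>
    hcF l ▸ hF _ (hcmoved l) i hi
  by_cases hstrict : ∃ l i, c l ∈ p i ∧ u i (c l) < u i (c (finRotate k l))
  · exact ⟨k, hk, c, hc, fun l i hi => (hedge l i hi).2, hstrict⟩
  push Not at hstrict
  -- Undoing a cycle of ties changes no agent's utility and leaves fewer objects moved.
  have htie : ∀ l i, c l ∈ p i →
      c (finRotate k l) ∈ q i ∧ u i (c l) = u i (c (finRotate k l)) := fun l i hi =>
    ⟨(hedge l i hi).1, (hedge l i hi).2.antisymm (hstrict l i hi)⟩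
  have hlt := ncard_movedSet_tradeAlong_lt (fun l i hi => (htie l i hi).1) (hcmoved ⟨0, by omega⟩)
  exact ih _ (hn ▸ hlt) (hq.tradeAlong (hc.comp (finRotate k).injective) _)
    (dominates_tradeAlong_symm hp hq hdom hc htie) rfl

end

/-- Under lexicographic utilities, p is Pareto optimal iff the exchange graph G(p)
has no cycle containing a strict-preference edge. -/
theorem lexicographic_pareto_optimal_iff_no_strict_cycle
    {N O : Type*} [Fintype N] [Fintype O]
    (u : N → O → ℝ) (hlex : Lexicographic u)
    (p : N → Finset O) (hp : IsPartition p) :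
    ParetoOptimal u p ↔
      ¬ ∃ (k : ℕ) (hk : 2 ≤ k) (c : Fin k → O), Function.Injective c ∧
        (∀ l : Fin k, ∀ i : N, c l ∈ p i →
          u i (c l) ≤ u i (c (nextFin (by omega) l))) ∧
        (∃ l : Fin k, ∃ i : N, c l ∈ p i ∧
          u i (c l) < u i (c (nextFin (by omega) l))) := by
  classical
  simp only [nextFin_eq_finRotate]
  constructor
  · rintro hpo ⟨k, -, c, hc, hweak, hstrict⟩
    exact hpo ⟨_, hp.tradeAlong hc _, dominates_tradeAlong hc hweak hstrict⟩
  · rintro hnc ⟨q, hq, hdom⟩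
    exact hnc (exists_strict_cycle_of_dominates hlex hp hq hdom)
end

section
/- An assignment p is necessarily Pareto optimal if and only if (i) p is possibly Pareto optimal (equivalently, SD-efficient) and (ii) p admits no one-for-two Pareto improvement swap. -/
open Finset

/-- `u` is an additive utility profile consistent with the ordinal preferences `r`
(`r i a b` means agent `i` weakly prefers object `a` to object `b`). -/
def Consistent {N O : Type*} (r : N → O → O → Prop) (u : N → O → ℝ) : Prop :=
  (∀ i o o', r i o o' ↔ u i o' ≤ u i o) ∧ ∀ i o, 0 < u i o

/-- `p` is necessarily Pareto optimal. -/
def NecPO {N O : Type*} [Fintype N] (r : N → O → O → Prop) (p : N → Finset O) : Prop :=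
  ∀ u : N → O → ℝ, Consistent r u → ParetoOptimal u p

/-- `p` is possibly Pareto optimal. -/
def PossPO {N O : Type*} [Fintype N] (r : N → O → O → Prop) (p : N → Finset O) : Prop :=
  ∃ u : N → O → ℝ, Consistent r u ∧ ParetoOptimal u p

/-- `p` admits a one-for-two Pareto improvement swap. -/
def HasSwap {N O : Type*} (r : N → O → O → Prop) (p : N → Finset O) : Prop :=
  ∃ (i j : N) (o₁ o₂ oₖ : O), i ≠ j ∧ o₁ ≠ o₂ ∧ o₁ ∈ p i ∧ o₂ ∈ p i ∧ oₖ ∈ p j ∧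
    (r i oₖ o₁ ∧ ¬ r i o₁ oₖ) ∧ r i o₁ o₂

/-!
A one-for-two swap is a Pareto improvement for a consistent utility in which the swapping agent's
values grow geometrically along its ranking while the partner's values are nearly constant, so a
necessarily Pareto optimal assignment admits none; possible Pareto optimality only needs one
consistent utility, and ranks provide one.

Conversely, without such swaps every object outside an agent's bundle is worth at most every
object of the bundle except the worst one. If `q` Pareto improves `p` for some consistent utility,
this forces all bundles to keep their sizes, and every agent who receives an object `y` gives away
an object it values at most as much as `y`. Following "`y` goes to an agent who gives away `x`"
from a moved object leads to a cycle of one-for-one trades, each weakly improving for its agent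
under every consistent utility. If one of them is strict, carrying out the cycle in `p` improves `p`
under the utility that makes it possibly Pareto optimal; otherwise undoing the cycle in `q` yields
an improvement of `p` that moves fewer objects.
-/

section Bundles

variable {N O : Type*} [DecidableEq N] [Fintype O]

def bundles (σ : O → N) (i : N) : Finset O := {o | σ o = i}

@[simp]
lemma mem_bundles {σ : O → N} {i : N} {o : O} : o ∈ bundles σ i ↔ σ o = i := by
  simp [bundles]

lemma isPartition_bundles (σ : O → N) : IsPartition (bundles σ) :=
  fun o => ⟨σ o, mem_bundles.2 rfl, fun _ h => (mem_bundles.1 h).symm⟩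

lemma IsPartition.exists_eq_bundles {p : N → Finset O} (hp : IsPartition p) :
    ∃ σ : O → N, p = bundles σ := by
  choose σ hσ using hp
  refine ⟨σ, funext fun i => Finset.ext fun o => ?_⟩
  rw [mem_bundles]
  exact ⟨fun h => ((hσ o).2 i h).symm, fun h => h ▸ (hσ o).1⟩

lemma sum_bundles_comp_perm (σ : O → N) (e : Equiv.Perm O) (f : O → ℝ) (i : N) :
    ∑ o ∈ bundles (σ ∘ e) i, f (e o) = ∑ o ∈ bundles σ i, f o :=
  Finset.sum_equiv e (by simp) (by simp)

lemma sum_bundles_comp_symm {u : N → O → ℝ} {κ : O → N} {e : Equiv.Perm O}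
    (he : ∀ y, u (κ y) (e y) = u (κ y) y) (i : N) :
    ∑ o ∈ bundles (κ ∘ e.symm) i, u i o = ∑ o ∈ bundles κ i, u i o := by
  rw [← sum_bundles_comp_perm (κ ∘ e.symm) e, Function.comp_assoc, e.symm_comp_self,
    Function.comp_id]
  exact sum_congr rfl fun o ho => (mem_bundles.1 ho) ▸ he o

lemma card_ne_comp_symm_lt {π κ : O → N} {e : Equiv.Perm O} (he : ∀ y, e y = y ∨ π (e y) = κ y)
    {y : O} (hy : π (e y) = κ y) (hey : κ (e y) ≠ π (e y)) :
    #{o | κ (e.symm o) ≠ π o} < #{o | κ o ≠ π o} := by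
  refine card_lt_card
    ((ssubset_iff_of_subset fun o ho => ?_).2 ⟨e y, by simpa, by simpa using hy.symm⟩)
  simp only [mem_filter, mem_univ, true_and] at ho ⊢
  rcases he (e.symm o) with h | h
  · rw [e.apply_symm_apply, eq_comm] at h
    rwa [h] at ho
  · exact absurd (by simpa using h.symm) ho

lemma sum_bundles_update [DecidableEq O] (σ : O → N) (o : O) (j : N) (f : O → ℝ) (i : N) :
    ∑ x ∈ bundles (Function.update σ o j) i, f x + (if σ o = i then f o else 0) =
      ∑ x ∈ bundles σ i, f x + (if j = i then f o else 0) := by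
  simp only [bundles, Finset.sum_filter]
  rw [← Finset.add_sum_erase _ _ (mem_univ o), ← Finset.add_sum_erase _ _ (mem_univ o),
    Finset.sum_congr rfl fun x hx => by rw [Function.update_of_ne (ne_of_mem_erase hx)]]
  simp only [Function.update_self]
  ring

lemma sum_bundles_sub_sum_bundles (π κ : O → N) (f : O → ℝ) (i : N) :
    ∑ o ∈ bundles κ i, f o - ∑ o ∈ bundles π i, f o =
      ∑ o ∈ {o | κ o ≠ π o ∧ κ o = i}, f o - ∑ o ∈ {o | κ o ≠ π o ∧ π o = i}, f o := by
  simp only [bundles, Finset.sum_filter, ← Finset.sum_sub_distrib]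
  refine Finset.sum_congr rfl fun o _ => ?_
  by_cases h : κ o = π o <;> simp [h]

variable [Fintype N] {u : N → O → ℝ}

lemma paretoOptimal_iff_forall_bundles {p : N → Finset O} :
    ParetoOptimal u p ↔ ∀ κ : O → N, ¬ Dominates u (bundles κ) p := by
  refine ⟨fun h κ hκ => h ⟨_, isPartition_bundles κ, hκ⟩, ?_⟩
  rintro h ⟨q, hq, hdom⟩
  obtain ⟨κ, rfl⟩ := hq.exists_eq_bundles
  exact h κ hdom

lemma exists_ne_of_dominates {π κ : O → N} (h : Dominates u (bundles κ) (bundles π)) :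
    ∃ y, κ y ≠ π y := by
  by_contra! hκ
  obtain ⟨-, i, hi⟩ := h
  rw [funext hκ] at hi
  exact hi.false

lemma dominates_bundles_comp_perm {π : O → N} {e : Equiv.Perm O}
    (hle : ∀ y, u (π (e y)) (e y) ≤ u (π (e y)) y)
    (hlt : ∃ y, u (π (e y)) (e y) < u (π (e y)) y) :
    Dominates u (bundles (π ∘ e)) (bundles π) := by
  have key i := (sum_bundles_comp_perm π e (u i) i).symm
  refine ⟨fun i => (key i).trans_le (sum_le_sum fun o ho => ?_), ?_⟩
  · rw [mem_bundles, Function.comp_apply] at ho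
    exact ho ▸ hle o
  · obtain ⟨y, hy⟩ := hlt
    refine ⟨π (e y), (key _).trans_lt (sum_lt_sum (fun o ho => ?_) ⟨y, by simp, hy⟩)⟩
    rw [mem_bundles, Function.comp_apply] at ho
    exact ho ▸ hle o

end Bundles

section Rank

variable {N O : Type*} {r : N → O → O → Prop}

lemma Consistent.le_iff_le {u v : N → O → ℝ} (hu : Consistent r u) (hv : Consistent r v)
    {i : N} {a b : O} : u i a ≤ u i b ↔ v i a ≤ v i b := by
  rw [← hu.1, hv.1]

lemma Consistent.rel_and_not_rel_iff {u : N → O → ℝ} (hu : Consistent r u) {i : N} {a b : O} :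
    (r i a b ∧ ¬ r i b a) ↔ u i b < u i a := by
  rw [hu.1, hu.1, lt_iff_le_not_ge]

variable [Fintype O]

open Classical in
noncomputable def prefRank (r : N → O → O → Prop) (i : N) (o : O) : ℕ := #{x | r i o x}

lemma prefRank_le_card (i : N) (o : O) : prefRank r i o ≤ Fintype.card O := by
  classical
  exact Finset.card_filter_le _ _

lemma prefRank_le_prefRank_iff (htot : ∀ i a b, r i a b ∨ r i b a)
    (htrans : ∀ i a b c, r i a b → r i b c → r i a c) {i : N} {o o' : O} :
    prefRank r i o' ≤ prefRank r i o ↔ r i o o' := by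
  classical
  have hsub : ∀ {a b}, r i a b → univ.filter (r i b ·) ⊆ univ.filter (r i a ·) := fun hab x => by
    simpa using htrans i _ _ x hab
  unfold prefRank
  refine ⟨fun hle => ?_, fun h => card_le_card (hsub h)⟩
  by_contra h
  refine hle.not_gt (card_lt_card ⟨hsub ((htot i o o').resolve_left h), fun hs => h ?_⟩)
  simpa using hs (by simpa using (htot i o' o').elim id id)

lemma consistent_comp_prefRank (htot : ∀ i a b, r i a b ∨ r i b a)
    (htrans : ∀ i a b c, r i a b → r i b c → r i a c) {φ : N → ℕ → ℝ}
    (hφ : ∀ i, StrictMono (φ i)) (hpos : ∀ i k, 0 < φ i k) :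
    Consistent r fun i o => φ i (prefRank r i o) :=
  ⟨fun i _ _ => by rw [(hφ i).le_iff_le, prefRank_le_prefRank_iff htot htrans], fun i _ => hpos i _⟩

lemma exists_consistent (htot : ∀ i a b, r i a b ∨ r i b a)
    (htrans : ∀ i a b c, r i a b → r i b c → r i a c) : ∃ u, Consistent r u :=
  ⟨_, consistent_comp_prefRank htot htrans (fun _ => Nat.strictMono_cast.add_const 1)
    fun _ k => k.cast_add_one_pos⟩

end Rank

section Swap

variable {N O : Type*} [Fintype O] {r : N → O → O → Prop}

lemma exists_consistent_add_lt (htot : ∀ i a b, r i a b ∨ r i b a)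
    (htrans : ∀ i a b c, r i a b → r i b c → r i a c) {i j : N} (hij : i ≠ j) {o₁ o₂ oₖ : O}
    (hk1 : ¬ r i o₁ oₖ) (h12 : r i o₁ o₂) :
    ∃ u, Consistent r u ∧ u i o₁ + u i o₂ < u i oₖ ∧ u j oₖ < u j o₁ + u j o₂ := by
  classical
  set φ : N → ℕ → ℝ := fun a k => if a = i then 3 ^ k else k + (Fintype.card O + 1)
  have hφ : ∀ a, StrictMono (φ a) := fun a => by
    by_cases ha : a = i
    · simpa [φ, ha] using pow_right_strictMono₀ (by norm_num : (1 : ℝ) < 3)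
    · simpa [φ, ha] using Nat.strictMono_cast.add_const _
  refine ⟨_, consistent_comp_prefRank htot htrans hφ fun a k => ?_, ?_, ?_⟩
  · unfold φ
    split_ifs <;> positivity
  · rw [← prefRank_le_prefRank_iff htot htrans, not_le] at hk1
    rw [← prefRank_le_prefRank_iff htot htrans] at h12
    have e1 := pow_le_pow_right₀ (by norm_num : (1 : ℝ) ≤ 3) (Nat.succ_le_of_lt hk1)
    have e2 := pow_le_pow_right₀ (by norm_num : (1 : ℝ) ≤ 3) h12
    simp only [φ, if_pos rfl, pow_succ] at e1 e2 ⊢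
    linarith [pow_pos (by norm_num : (0 : ℝ) < 3) (prefRank r i o₂)]
  · have : (prefRank r j oₖ : ℝ) ≤ Fintype.card O := by exact_mod_cast prefRank_le_card j oₖ
    simp only [φ, if_neg hij.symm]
    linarith [(prefRank r j o₁).cast_nonneg (α := ℝ), (prefRank r j o₂).cast_nonneg (α := ℝ)]

lemma dominates_bundles_swap [Fintype N] [DecidableEq N] [DecidableEq O] {u : N → O → ℝ}
    {π : O → N} {i j : N} (hij : i ≠ j) {o₁ o₂ oₖ : O} (h12 : o₁ ≠ o₂) (h1 : π o₁ = i)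
    (h2 : π o₂ = i) (hk : π oₖ = j) (hgain_i : u i o₁ + u i o₂ < u i oₖ)
    (hgain_j : u j oₖ < u j o₁ + u j o₂) :
    Dominates u (bundles (Function.update (Function.update (Function.update π o₁ j) o₂ j) oₖ i))
      (bundles π) := by
  have hk1 : oₖ ≠ o₁ := fun h => hij (h1.symm.trans (h ▸ hk))
  have hk2 : oₖ ≠ o₂ := fun h => hij (h2.symm.trans (h ▸ hk))
  have hgain : ∀ a, ∑ o ∈ bundles (Function.update (Function.update
      (Function.update π o₁ j) o₂ j) oₖ i) a, u a o - ∑ o ∈ bundles π a, u a o =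
      if a = j then u a o₁ + u a o₂ - u a oₖ else if a = i then u a oₖ - u a o₁ - u a o₂
      else 0 := fun a => by
    have e1 := sum_bundles_update π o₁ j (u a) a
    have e2 := sum_bundles_update (Function.update π o₁ j) o₂ j (u a) a
    have e3 := sum_bundles_update (Function.update (Function.update π o₁ j) o₂ j) oₖ i (u a) a
    simp only [Function.update_of_ne h12.symm, Function.update_of_ne hk1,
      Function.update_of_ne hk2, h1, h2, hk] at e1 e2 e3
    by_cases haj : a = j
    · subst haj; simp only [if_neg hij, if_true] at e1 e2 e3 ⊢; linarith
    by_cases hai : a = i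
    · subst hai; simp only [if_neg haj, if_neg (Ne.symm haj), if_true] at e1 e2 e3 ⊢; linarith
    simp only [if_neg haj, if_neg hai, if_neg (Ne.symm haj), if_neg (Ne.symm hai)] at e1 e2 e3 ⊢
    linarith
  refine ⟨fun a => ?_, i, ?_⟩
  · have := hgain a
    split_ifs at this with haj hai
    · subst haj; linarith
    · subst hai; linarith
    · linarith
  · have := hgain i
    rw [if_neg hij, if_pos rfl] at this
    linarith

lemma exists_consistent_not_paretoOptimal_of_hasSwap [Fintype N]
    (htot : ∀ i a b, r i a b ∨ r i b a) (htrans : ∀ i a b c, r i a b → r i b c → r i a c)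
    {p : N → Finset O} (hp : IsPartition p) (hs : HasSwap r p) :
    ∃ u, Consistent r u ∧ ¬ ParetoOptimal u p := by
  classical
  obtain ⟨π, rfl⟩ := hp.exists_eq_bundles
  obtain ⟨i, j, o₁, o₂, oₖ, hij, h12, h1, h2, hk, ⟨-, hk1⟩, h12r⟩ := hs
  rw [mem_bundles] at h1 h2 hk
  obtain ⟨u, hu, hgain_i, hgain_j⟩ := exists_consistent_add_lt htot htrans hij hk1 h12r
  exact ⟨u, hu, paretoOptimal_iff_forall_bundles.not.2 fun h =>
    h _ (dominates_bundles_swap hij h12 h1 h2 hk hgain_i hgain_j)⟩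

end Swap

section Sums

variable {α : Type*} {C D : Finset α} {f : α → ℝ}

lemma sum_le_sum_of_forall_le_of_card_le {E : Finset α} (hcard : #C ≤ #E)
    (hle : ∀ c ∈ C, ∀ x ∈ E, f c ≤ f x) (hE : ∀ x ∈ E, 0 ≤ f x) :
    ∑ c ∈ C, f c ≤ ∑ x ∈ E, f x := by
  rcases E.eq_empty_or_nonempty with rfl | hne
  · simp_all
  obtain ⟨m, hm, hmin⟩ := E.exists_min_image f hne
  calc ∑ c ∈ C, f c ≤ #C • f m := sum_le_card_nsmul _ _ _ fun c hc => hle c hc m hm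
    _ ≤ #E • f m := nsmul_le_nsmul_left (hE m hm) hcard
    _ ≤ ∑ x ∈ E, f x := card_nsmul_le_sum _ _ _ hmin

variable [DecidableEq α] (hCD : ∀ c ∈ C, ∀ a ∈ D, ∀ b ∈ D, a ≠ b → f c ≤ f a ∨ f c ≤ f b)
include hCD

lemma exists_forall_le_of_mem_erase (hD : D.Nonempty) :
    ∃ e ∈ D, ∀ c ∈ C, ∀ x ∈ D.erase e, f c ≤ f x := by
  obtain ⟨e, he, hmin⟩ := D.exists_min_image f hD
  refine ⟨e, he, fun c hc x hx => ?_⟩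
  obtain ⟨hxe, hx⟩ := mem_erase.1 hx
  exact (hCD c hc x hx e he hxe).elim id fun h => h.trans (hmin x hx)

variable (hpos : ∀ x ∈ D, 0 < f x) (hsum : ∑ x ∈ D, f x ≤ ∑ c ∈ C, f c)
include hpos hsum

lemma card_le_card_of_sum_le : #D ≤ #C := by
  by_contra! hlt
  obtain ⟨e, he, hle⟩ := exists_forall_le_of_mem_erase hCD (card_pos.1 (by omega))
  have := sum_le_sum_of_forall_le_of_card_le (by rw [card_erase_of_mem he]; omega) hle
    fun x hx => (hpos x (mem_of_mem_erase hx)).le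
  linarith [sum_erase_add D f he, hpos e he]

lemma exists_mem_le_of_sum_le (hcard : #C ≤ #D) {c : α} (hc : c ∈ C) : ∃ d ∈ D, f d ≤ f c := by
  by_contra! hlt
  obtain ⟨e, he, hle⟩ := exists_forall_le_of_mem_erase hCD
    (card_pos.1 ((card_pos.2 ⟨c, hc⟩).trans_le hcard))
  have := sum_le_sum_of_forall_le_of_card_le
    (by rw [card_erase_of_mem he, card_erase_of_mem hc]; omega)
    (fun x hx => hle x (mem_of_mem_erase hx)) fun x hx => (hpos x (mem_of_mem_erase hx)).le
  linarith [sum_erase_add C f hc, sum_erase_add D f he, hlt e he]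

end Sums

theorem Function.exists_iterate_mem_periodicPts {α : Type*} [Finite α] (f : α → α) (x : α) :
    ∃ n, f^[n] x ∈ Function.periodicPts f := by
  obtain ⟨a, b, hab, h⟩ := Finite.exists_ne_map_eq_of_infinite fun n => f^[n] x
  wlog hlt : a < b generalizing a b
  · exact this b a hab.symm h.symm (by omega)
  refine ⟨a, Function.mk_mem_periodicPts (n := b - a) (by omega) ?_⟩
  change f^[b - a] (f^[a] x) = f^[a] x
  rw [← Function.iterate_add_apply, Nat.sub_add_cancel hlt.le]
  exact h.symm

theorem exists_perm_of_mapsTo {α : Type*} [Finite α] {f : α → α} {s : Set α}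
    (hf : Set.MapsTo f s s) (hs : s.Nonempty) :
    ∃ e : Equiv.Perm α, (∃ x ∈ s, e x = f x) ∧ ∀ x, e x = x ∨ (x ∈ s ∧ e x = f x) := by
  classical
  -- `f` permutes the periodic points in `s`
  set t := s ∩ Function.periodicPts f
  have hft : Set.MapsTo f t t := fun x hx =>
    ⟨hf hx.1, (Function.bijOn_periodicPts f).mapsTo hx.2⟩
  set g := fun x => if x ∈ t then f x else x
  have hg : Function.Injective g := fun x y hxy => by
    simp only [g] at hxy
    split_ifs at hxy with hx hy hy
    · exact (Function.bijOn_periodicPts f).injOn hx.2 hy.2 hxy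
    · exact absurd (hxy ▸ hft hx) hy
    · exact absurd (hxy ▸ hft hy) hx
    · exact hxy
  refine ⟨Equiv.ofBijective g (Finite.injective_iff_bijective.1 hg), ?_, fun x => ?_⟩
  · obtain ⟨x, hx⟩ := hs
    obtain ⟨n, hn⟩ := Function.exists_iterate_mem_periodicPts f x
    exact ⟨_, hf.iterate n hx, if_pos ⟨hf.iterate n hx, hn⟩⟩
  · by_cases hx : x ∈ t
    · exact Or.inr ⟨hx.1, if_pos hx⟩
    · exact Or.inl (if_neg hx)

lemma le_or_le_of_not_hasSwap {N O : Type*} {r : N → O → O → Prop} {p : N → Finset O}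
    (hp : IsPartition p) (hs : ¬ HasSwap r p) {u : N → O → ℝ} (hu : Consistent r u) {i : N}
    {a b c : O} (ha : a ∈ p i) (hb : b ∈ p i) (hab : a ≠ b) (hc : c ∉ p i) :
    u i c ≤ u i a ∨ u i c ≤ u i b := by
  by_contra! h
  obtain ⟨j, hj, -⟩ := hp c
  have hij : i ≠ j := by rintro rfl; exact hc hj
  rcases le_total (u i b) (u i a) with hba | hab'
  · exact hs ⟨i, j, a, b, c, hij, hab, ha, hb, hj, hu.rel_and_not_rel_iff.2 h.1, (hu.1 i a b).2 hba⟩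
  · exact hs ⟨i, j, b, a, c, hij, hab.symm, hb, ha, hj, hu.rel_and_not_rel_iff.2 h.2,
      (hu.1 i b a).2 hab'⟩

section Exchange

variable {N O : Type*} [Fintype N] [DecidableEq N] [Fintype O] {r : N → O → O → Prop}

lemma exists_le_of_not_hasSwap {π κ : O → N} (hs : ¬ HasSwap r (bundles π)) {u : N → O → ℝ}
    (hu : Consistent r u) (hle : ∀ i, ∑ o ∈ bundles π i, u i o ≤ ∑ o ∈ bundles κ i, u i o)
    {y : O} (hy : κ y ≠ π y) : ∃ x, π x = κ y ∧ κ x ≠ π x ∧ u (κ y) x ≤ u (κ y) y := by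
  classical
  set C : N → Finset O := fun i => {o | κ o ≠ π o ∧ κ o = i}
  set D : N → Finset O := fun i => {o | κ o ≠ π o ∧ π o = i}
  have hsum : ∀ i, ∑ o ∈ D i, u i o ≤ ∑ o ∈ C i, u i o := fun i => by
    linarith [hle i, sum_bundles_sub_sum_bundles π κ (u i) i]
  have hCD : ∀ i, ∀ c ∈ C i, ∀ a ∈ D i, ∀ b ∈ D i, a ≠ b → u i c ≤ u i a ∨ u i c ≤ u i b := by
    intro i c hc a ha b hb hab
    simp only [C, D, mem_filter, mem_univ, true_and] at hc ha hb
    refine le_or_le_of_not_hasSwap (isPartition_bundles π) hs hu (mem_bundles.2 ha.2)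
      (mem_bundles.2 hb.2) hab ?_
    rw [mem_bundles, ← hc.2]
    exact hc.1.symm
  have hpos : ∀ i, ∀ x ∈ D i, 0 < u i x := fun i x _ => hu.2 i x
  have hDC : ∀ i ∈ univ, #(D i) ≤ #(C i) := fun i _ =>
    card_le_card_of_sum_le (hCD i) (hpos i) (hsum i)
  -- both sides count the moved objects
  have htotal : ∑ i, #(D i) = ∑ i, #(C i) := by
    simp only [C, D, ← filter_filter]
    rw [← card_eq_sum_card_fiberwise (by simp), ← card_eq_sum_card_fiberwise (by simp)]
  have hcard := ((sum_eq_sum_iff_of_le hDC).1 htotal (κ y) (mem_univ _)).ge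
  obtain ⟨x, hx, hxy⟩ := exists_mem_le_of_sum_le (hCD _) (hpos _) (hsum _) hcard (c := y)
    (by simp [C, hy])
  simp only [D, mem_filter, mem_univ, true_and] at hx
  exact ⟨x, hx.2, hx.1, hxy⟩

lemma exists_perm_of_dominates {π κ : O → N} (hs : ¬ HasSwap r (bundles π)) {u : N → O → ℝ}
    (hu : Consistent r u) (hdom : Dominates u (bundles κ) (bundles π)) :
    ∃ e : Equiv.Perm O, (∃ y, π (e y) = κ y ∧ κ (e y) ≠ π (e y)) ∧
      ∀ y, e y = y ∨ (π (e y) = κ y ∧ κ y ≠ π y ∧ u (κ y) (e y) ≤ u (κ y) y) := by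
  choose! ψ hψ using fun y (hy : κ y ≠ π y) => exists_le_of_not_hasSwap hs hu hdom.1 hy
  obtain ⟨e, ⟨y, hy, hey⟩, he⟩ := exists_perm_of_mapsTo (s := {y | κ y ≠ π y})
    (fun y hy => (hψ y hy).2.1) (exists_ne_of_dominates hdom)
  refine ⟨e, ⟨y, hey ▸ ⟨(hψ y hy).1, (hψ y hy).2.1⟩⟩, fun y => ?_⟩
  rcases he y with h | ⟨hy, h⟩
  · exact Or.inl h
  · exact Or.inr (h ▸ ⟨(hψ y hy).1, hy, (hψ y hy).2.2⟩)

theorem paretoOptimal_of_not_hasSwap {π : O → N} (hs : ¬ HasSwap r (bundles π))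
    {u₀ u : N → O → ℝ} (hu₀ : Consistent r u₀) (hpo : ParetoOptimal u₀ (bundles π))
    (hu : Consistent r u) : ParetoOptimal u (bundles π) := by
  rw [paretoOptimal_iff_forall_bundles] at hpo ⊢
  intro κ hdom
  induction hn : #{o | κ o ≠ π o} using Nat.strong_induction_on generalizing κ with
  | _ n ih =>
  obtain ⟨e, ⟨y₀, hy₀, hey₀⟩, he⟩ := exists_perm_of_dominates hs hu hdom
  by_cases hstrict : ∃ y, e y ≠ y ∧ u₀ (κ y) (e y) < u₀ (κ y) y
  · refine hpo (π ∘ e) (dominates_bundles_comp_perm (fun y => ?_) ?_)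
    · rcases he y with h | ⟨h1, -, h3⟩
      · rw [h]
      · rw [h1]; exact (hu.le_iff_le hu₀).1 h3
    · obtain ⟨y, hne, hlt⟩ := hstrict
      rcases he y with h | ⟨h1, -⟩
      · exact absurd h hne
      · exact ⟨y, h1 ▸ hlt⟩
  push Not at hstrict
  have heq : ∀ y, u (κ y) (e y) = u (κ y) y := fun y => by
    rcases he y with h | ⟨h1, h2, h3⟩
    · rw [h]
    · exact le_antisymm h3 ((hu₀.le_iff_le hu).1
        (hstrict y fun h => h2 (h1.symm.trans (congrArg π h))))
  refine ih _ (hn ▸ card_ne_comp_symm_lt (fun y => (he y).imp_right And.left) hy₀ hey₀)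
    (κ ∘ e.symm) ⟨fun i => ?_, ?_⟩ rfl
  · rw [sum_bundles_comp_symm heq]
    exact hdom.1 i
  · obtain ⟨i, hi⟩ := hdom.2
    exact ⟨i, by rwa [sum_bundles_comp_symm heq]⟩

end Exchange

/-- Characterization of necessary Pareto optimality: p is necessarily Pareto
optimal iff p is possibly Pareto optimal and admits no one-for-two Pareto
improvement swap. -/
theorem necessarily_pareto_optimal_iff
    {N O : Type*} [Fintype N] [Fintype O]
    (r : N → O → O → Prop)
    (htot : ∀ i a b, r i a b ∨ r i b a)
    (htrans : ∀ i a b c, r i a b → r i b c → r i a c)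
    (p : N → Finset O) (hp : IsPartition p) :
    NecPO r p ↔ (PossPO r p ∧ ¬ HasSwap r p) := by
  classical
  constructor
  · intro hnec
    obtain ⟨u, hu⟩ := exists_consistent htot htrans
    refine ⟨⟨u, hu, hnec u hu⟩, fun hs => ?_⟩
    obtain ⟨v, hv, hnpo⟩ := exists_consistent_not_paretoOptimal_of_hasSwap htot htrans hp hs
    exact hnpo (hnec v hv)
  · rintro ⟨⟨u₀, hu₀, hpo⟩, hs⟩ u hu
    obtain ⟨π, rfl⟩ := hp.exists_eq_bundles
    exact paretoOptimal_of_not_hasSwap hs hu₀ hpo hu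
end
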